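/- arXiv:2506.17880 — 7 statements merged into one kernel-verified Lean document; each statement's English description precedes it below -/
import Mathlib

section
/- Fix an index i and nonnegative weights c_j ≥ 0 for all j ≠ i, and for each s ≥ 0 let θ*(s) denote a chosen global minimizer of the total loss with c_i = s, i.e. of θ ↦ s·L_i(r_i(θ)) + ∑_{j ≠ i} c_j L_j(r_j(θ)). Assume L_i is accuracy-rewarding with respect to a value r̂_i, and assume the trajectory is one-sided from r̂_i: either r_i(θ*(s)) ≤ r̂_i for all s ≥ 0, or r_i(θ*(s)) ≥ r̂_i for all s ≥ 0. Then in the first case s ↦ r_i(θ*(s)) is nondecreasing on [0, ∞), and in the second case it is nonincreasing on [0, ∞); in either case s ↦ |r_i(θ*(s)) − r̂_i| is nonincreasing. -/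
/-- A loss `L : ℝ → ℝ` is accuracy-rewarding with respect to a value `r̂` if
`L r > L r'` whenever `r < r' ≤ r̂` or `r̂ ≤ r' < r`. -/
def AccuracyRewarding (L : ℝ → ℝ) (rhat : ℝ) : Prop :=
  ∀ x y : ℝ, ((x < y ∧ y ≤ rhat) ∨ (rhat ≤ y ∧ y < x)) → L y < L x

/-- Part (A) of the paper's Theorem 1: if the sub-loss `L i` is accuracy-rewarding and the
trajectory of optimal sub-property values is one-sided from `r̂ᵢ`, then the optimal estimate
of the `i`-th sub-property moves monotonically toward `r̂ᵢ` as its weight increases. -/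
theorem one_sided_trajectory_monotone
    {Θ : Type*} [Nonempty Θ] (M : ℕ) (r : Fin M → Θ → ℝ) (L : Fin M → ℝ → ℝ)
    (i : Fin M) (c : Fin M → ℝ) (hc : ∀ j, j ≠ i → 0 ≤ c j)
    (rhat : ℝ) (hL : AccuracyRewarding (L i) rhat)
    (θstar : ℝ → Θ)
    (hmin : ∀ s : ℝ, 0 ≤ s → ∀ θ : Θ,
      s * L i (r i (θstar s)) + ∑ j ∈ Finset.univ.erase i, c j * L j (r j (θstar s)) ≤
      s * L i (r i θ) + ∑ j ∈ Finset.univ.erase i, c j * L j (r j θ))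
    (honesided : (∀ s : ℝ, 0 ≤ s → r i (θstar s) ≤ rhat) ∨
      (∀ s : ℝ, 0 ≤ s → rhat ≤ r i (θstar s))) :
    ((∀ s : ℝ, 0 ≤ s → r i (θstar s) ≤ rhat) →
        MonotoneOn (fun s => r i (θstar s)) (Set.Ici 0)) ∧
    ((∀ s : ℝ, 0 ≤ s → rhat ≤ r i (θstar s)) →
        AntitoneOn (fun s => r i (θstar s)) (Set.Ici 0)) ∧
    AntitoneOn (fun s => |r i (θstar s) - rhat|) (Set.Ici 0) := by
  -- Key: loss value is nonincreasing along the trajectory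
  have key : ∀ s₁ s₂ : ℝ, 0 ≤ s₁ → s₁ ≤ s₂ →
      L i (r i (θstar s₂)) ≤ L i (r i (θstar s₁)) := by
    intro s₁ s₂ h1 h12
    rcases eq_or_lt_of_le h12 with rfl | hlt
    · exact le_rfl
    · have ha := hmin s₁ h1 (θstar s₂)
      have hb := hmin s₂ (le_trans h1 h12) (θstar s₁)
      nlinarith [ha, hb]
  have left : (∀ s : ℝ, 0 ≤ s → r i (θstar s) ≤ rhat) →
      MonotoneOn (fun s => r i (θstar s)) (Set.Ici 0) := by
    intro hle s₁ hs₁ s₂ hs₂ h12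
    by_contra hcon
    push_neg at hcon
    have := hL (r i (θstar s₂)) (r i (θstar s₁)) (Or.inl ⟨hcon, hle s₁ hs₁⟩)
    have := key s₁ s₂ hs₁ h12
    linarith
  have right : (∀ s : ℝ, 0 ≤ s → rhat ≤ r i (θstar s)) →
      AntitoneOn (fun s => r i (θstar s)) (Set.Ici 0) := by
    intro hge s₁ hs₁ s₂ hs₂ h12
    by_contra hcon
    push_neg at hcon
    have := hL (r i (θstar s₂)) (r i (θstar s₁)) (Or.inr ⟨hge s₁ hs₁, hcon⟩)
    have := key s₁ s₂ hs₁ h12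
    linarith
  refine ⟨left, right, ?_⟩
  rcases honesided with h | h
  · intro s₁ hs₁ s₂ hs₂ h12
    have := left h hs₁ hs₂ h12
    have h1 := h s₁ hs₁
    have h2 := h s₂ hs₂
    simp only at this
    simp only [abs_sub_comm]
    rw [abs_of_nonneg (by linarith), abs_of_nonneg (by linarith)]
    linarith
  · intro s₁ hs₁ s₂ hs₂ h12
    have := right h hs₁ hs₂ h12
    have h1 := h s₁ hs₁
    have h2 := h s₂ hs₂
    simp only at this ⊢
    rw [abs_of_nonneg (by linarith : (0:ℝ) ≤ r i (θstar s₂) - rhat),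
        abs_of_nonneg (by linarith : (0:ℝ) ≤ r i (θstar s₁) - rhat)]
    linarith
end

section
/- Fix an index i and nonnegative weights c_j ≥ 0 for all j ≠ i, and for each s ≥ 0 let θ*(s) denote a chosen global minimizer of the total loss with c_i = s, i.e. of θ ↦ s·L_i(r_i(θ)) + ∑_{j ≠ i} c_j L_j(r_j(θ)). Assume L_i is accuracy-rewarding with respect to a value r̂_i and that the trajectory is one-sided from r̂_i (either r_i(θ*(s)) ≤ r̂_i for all s ≥ 0, or r_i(θ*(s)) ≥ r̂_i for all s ≥ 0). Let t : ℝ^M → ℝ be a link function, and write r(θ) = (r_1(θ), …, r_M(θ)). Suppose t is weakly monotone along the trajectory with respect to the i-th coordinate: either for all s, s' ≥ 0, r_i(θ*(s)) ≤ r_i(θ*(s')) implies t(r(θ*(s))) ≤ t(r(θ*(s'))), or for all s, s' ≥ 0, r_i(θ*(s)) ≤ r_i(θ*(s')) implies t(r(θ*(s))) ≥ t(r(θ*(s'))). Then the map s ↦ t(r(θ*(s))) is monotone (nondecreasing or nonincreasing) on [0, ∞). -/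
/-- Sufficiency direction of part (B) of the paper's Theorem 1: monotonicity of the link
function along the sub-property trajectory yields monotonicity of the optimal
target-property estimate in the weight. -/
theorem link_monotone_along_trajectory_gives_monotone_target
    {Θ : Type*} [Nonempty Θ] (M : ℕ) (r : Fin M → Θ → ℝ) (L : Fin M → ℝ → ℝ)
    (i : Fin M) (c : Fin M → ℝ) (hc : ∀ j, j ≠ i → 0 ≤ c j)
    (rhat : ℝ) (hL : AccuracyRewarding (L i) rhat)
    (θstar : ℝ → Θ)
    (hmin : ∀ s : ℝ, 0 ≤ s → ∀ θ : Θ,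
      s * L i (r i (θstar s)) + ∑ j ∈ Finset.univ.erase i, c j * L j (r j (θstar s)) ≤
      s * L i (r i θ) + ∑ j ∈ Finset.univ.erase i, c j * L j (r j θ))
    (honesided : (∀ s : ℝ, 0 ≤ s → r i (θstar s) ≤ rhat) ∨
      (∀ s : ℝ, 0 ≤ s → rhat ≤ r i (θstar s)))
    (t : (Fin M → ℝ) → ℝ)
    (hlink : (∀ s s' : ℝ, 0 ≤ s → 0 ≤ s' → r i (θstar s) ≤ r i (θstar s') →
        t (fun j => r j (θstar s)) ≤ t (fun j => r j (θstar s'))) ∨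
      (∀ s s' : ℝ, 0 ≤ s → 0 ≤ s' → r i (θstar s) ≤ r i (θstar s') →
        t (fun j => r j (θstar s')) ≤ t (fun j => r j (θstar s)))) :
    MonotoneOn (fun s => t (fun j => r j (θstar s))) (Set.Ici 0) ∨
      AntitoneOn (fun s => t (fun j => r j (θstar s))) (Set.Ici 0) := by
  -- Exchange argument: L i (r i (θstar s)) is nonincreasing in s.
  have key : ∀ s s' : ℝ, 0 ≤ s → 0 ≤ s' → s < s' →
      L i (r i (θstar s')) ≤ L i (r i (θstar s)) := by
    intro s s' hs hs' hss
    have h1 := hmin s hs (θstar s')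
    have h2 := hmin s' hs' (θstar s)
    nlinarith
  -- Hence r i (θstar s) is monotone in s, direction depending on the one-sidedness.
  have hr : (∀ s s' : ℝ, 0 ≤ s → 0 ≤ s' → s ≤ s' → r i (θstar s) ≤ r i (θstar s')) ∨
      (∀ s s' : ℝ, 0 ≤ s → 0 ≤ s' → s ≤ s' → r i (θstar s') ≤ r i (θstar s)) := by
    rcases honesided with h | h
    · left
      intro s s' hs hs' hss
      rcases eq_or_lt_of_le hss with rfl | hlt
      · exact le_refl _
      · by_contra hcon
        push_neg at hcon
        have := hL (r i (θstar s')) (r i (θstar s)) (Or.inl ⟨hcon, h s hs⟩)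
        have := key s s' hs hs' hlt
        linarith
    · right
      intro s s' hs hs' hss
      rcases eq_or_lt_of_le hss with rfl | hlt
      · exact le_refl _
      · by_contra hcon
        push_neg at hcon
        have := hL (r i (θstar s')) (r i (θstar s)) (Or.inr ⟨h s hs, hcon⟩)
        have := key s s' hs hs' hlt
        linarith
  rcases hr with hr | hr <;> rcases hlink with hlink | hlink
  · exact Or.inl fun a ha b hb hab => hlink a b ha hb (hr a b ha hb hab)
  · exact Or.inr fun a ha b hb hab => hlink a b ha hb (hr a b ha hb hab)
  · exact Or.inr fun a ha b hb hab => hlink b a hb ha (hr a b ha hb hab)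
  · exact Or.inl fun a ha b hb hab => hlink b a hb ha (hr a b ha hb hab)
end

section
/- In the two-sub-property curve setting, assume R : ℝ → ℝ is strictly monotone and continuous. Then the optimal sub-property points for all admissible weights lie in a single closed quadrant centered at (r̂_1, r̂_2): for any two admissible weight vectors c = (c_1, c_2) and c' = (c'_1, c'_2) and any corresponding global minimizers x*_c and x*_{c'}, one has (x*_c − r̂_1)·(x*_{c'} − r̂_1) ≥ 0 and (R(x*_c) − r̂_2)·(R(x*_{c'}) − r̂_2) ≥ 0. In particular, if R is strictly increasing and r̂_2 ≤ R(r̂_1), then every admissible weight vector c and every global minimizer x*_c satisfy x*_c ≤ r̂_1 and R(x*_c) ≥ r̂_2. -/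
lemma AccuracyRewarding.neg {L : ℝ → ℝ} {rhat : ℝ} (h : AccuracyRewarding L rhat) :
    AccuracyRewarding (fun t => L (-t)) (-rhat) := by
  intro x y hxy
  rcases hxy with ⟨h1, h2⟩ | ⟨h1, h2⟩
  · exact h (-x) (-y) (Or.inr ⟨by linarith, by linarith⟩)
  · exact h (-x) (-y) (Or.inl ⟨by linarith, by linarith⟩)

lemma left_min {L₁ L₂ : ℝ → ℝ} {rhat₁ rhat₂ : ℝ}
    (hL₁ : AccuracyRewarding L₁ rhat₁) (hL₂ : AccuracyRewarding L₂ rhat₂)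
    {R : ℝ → ℝ} (hR : StrictMono R) (hRc : Continuous R)
    {c₁ c₂ : ℝ} (h₁ : 0 ≤ c₁) (h₂ : 0 ≤ c₂) (hne : ¬(c₁ = 0 ∧ c₂ = 0))
    {x : ℝ} (hmin : ∀ y : ℝ, c₁ * L₁ x + c₂ * L₂ (R x) ≤ c₁ * L₁ y + c₂ * L₂ (R y))
    (hx : x < rhat₁) : rhat₂ ≤ R x := by
  have hc₂ : 0 < c₂ := by
    rcases h₂.lt_or_eq with h | h
    · exact h
    · exfalso
      have hc₁ : 0 < c₁ := by
        rcases h₁.lt_or_eq with h' | h'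
        · exact h'
        · exact (hne ⟨h'.symm, h.symm⟩).elim
      have h3 := hmin rhat₁
      rw [← h] at h3
      have h4 : L₁ rhat₁ < L₁ x := hL₁ x rhat₁ (Or.inl ⟨hx, le_refl _⟩)
      nlinarith
  have key : ∀ y ∈ Set.Ioc x rhat₁, rhat₂ ≤ R y := by
    intro y hy
    by_contra hylt
    push_neg at hylt
    have h4 : L₁ y < L₁ x := hL₁ x y (Or.inl ⟨hy.1, hy.2⟩)
    have h5 : L₂ (R y) < L₂ (R x) := hL₂ (R x) (R y) (Or.inl ⟨hR hy.1, hylt.le⟩)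
    have h3 := hmin y
    nlinarith
  have ht : Filter.Tendsto R (nhdsWithin x (Set.Ioi x)) (nhds (R x)) :=
    (hRc.continuousAt).tendsto.mono_left nhdsWithin_le_nhds
  exact ge_of_tendsto ht (Filter.eventually_of_mem
    (Ioc_mem_nhdsGT_of_mem ⟨le_refl x, hx⟩) key)

lemma right_min {L₁ L₂ : ℝ → ℝ} {rhat₁ rhat₂ : ℝ}
    (hL₁ : AccuracyRewarding L₁ rhat₁) (hL₂ : AccuracyRewarding L₂ rhat₂)
    {R : ℝ → ℝ} (hR : StrictMono R) (hRc : Continuous R)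
    {c₁ c₂ : ℝ} (h₁ : 0 ≤ c₁) (h₂ : 0 ≤ c₂) (hne : ¬(c₁ = 0 ∧ c₂ = 0))
    {x : ℝ} (hmin : ∀ y : ℝ, c₁ * L₁ x + c₂ * L₂ (R x) ≤ c₁ * L₁ y + c₂ * L₂ (R y))
    (hx : rhat₁ < x) : R x ≤ rhat₂ := by
  have hc₂ : 0 < c₂ := by
    rcases h₂.lt_or_eq with h | h
    · exact h
    · exfalso
      have hc₁ : 0 < c₁ := by
        rcases h₁.lt_or_eq with h' | h'
        · exact h'
        · exact (hne ⟨h'.symm, h.symm⟩).elim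
      have h3 := hmin rhat₁
      rw [← h] at h3
      have h4 : L₁ rhat₁ < L₁ x := hL₁ x rhat₁ (Or.inr ⟨le_refl _, hx⟩)
      nlinarith
  have key : ∀ y ∈ Set.Ico rhat₁ x, R y ≤ rhat₂ := by
    intro y hy
    by_contra hygt
    push_neg at hygt
    have h4 : L₁ y < L₁ x := hL₁ x y (Or.inr ⟨hy.1, hy.2⟩)
    have h5 : L₂ (R y) < L₂ (R x) := hL₂ (R x) (R y) (Or.inr ⟨hygt.le, hR hy.2⟩)
    have h3 := hmin y
    nlinarith
  have ht : Filter.Tendsto R (nhdsWithin x (Set.Iio x)) (nhds (R x)) :=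
    (hRc.continuousAt).tendsto.mono_left nhdsWithin_le_nhds
  exact le_of_tendsto ht (Filter.eventually_of_mem
    (Ico_mem_nhdsLT_of_mem ⟨hx, le_refl x⟩) key)

lemma quadrant_mono {L₁ L₂ : ℝ → ℝ} {rhat₁ rhat₂ : ℝ}
    (hL₁ : AccuracyRewarding L₁ rhat₁) (hL₂ : AccuracyRewarding L₂ rhat₂)
    {R : ℝ → ℝ} (hR : StrictMono R) (hRc : Continuous R)
    {c₁ c₂ c₁' c₂' : ℝ} (h₁ : 0 ≤ c₁) (h₂ : 0 ≤ c₂) (hne : ¬(c₁ = 0 ∧ c₂ = 0))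
    (h₁' : 0 ≤ c₁') (h₂' : 0 ≤ c₂') (hne' : ¬(c₁' = 0 ∧ c₂' = 0))
    {x x' : ℝ}
    (hmin : ∀ y : ℝ, c₁ * L₁ x + c₂ * L₂ (R x) ≤ c₁ * L₁ y + c₂ * L₂ (R y))
    (hmin' : ∀ y : ℝ, c₁' * L₁ x' + c₂' * L₂ (R x') ≤ c₁' * L₁ y + c₂' * L₂ (R y)) :
    0 ≤ (x - rhat₁) * (x' - rhat₁) ∧ 0 ≤ (R x - rhat₂) * (R x' - rhat₂) := by
  constructor
  · by_contra hc
    push_neg at hc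
    rcases mul_neg_iff.mp hc with ⟨ha, hb⟩ | ⟨ha, hb⟩
    · -- x > rhat₁, x' < rhat₁
      have e1 : R x ≤ rhat₂ := right_min hL₁ hL₂ hR hRc h₁ h₂ hne hmin (by linarith)
      have e2 : rhat₂ ≤ R x' := left_min hL₁ hL₂ hR hRc h₁' h₂' hne' hmin' (by linarith)
      have : R x' < R x := hR (by linarith)
      linarith
    · -- x < rhat₁, x' > rhat₁
      have e1 : rhat₂ ≤ R x := left_min hL₁ hL₂ hR hRc h₁ h₂ hne hmin (by linarith)
      have e2 : R x' ≤ rhat₂ := right_min hL₁ hL₂ hR hRc h₁' h₂' hne' hmin' (by linarith)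
      have : R x < R x' := hR (by linarith)
      linarith
  · by_contra hc
    push_neg at hc
    rcases mul_neg_iff.mp hc with ⟨ha, hb⟩ | ⟨ha, hb⟩
    · -- R x > rhat₂, R x' < rhat₂
      have e1 : x ≤ rhat₁ := by
        by_contra h; push_neg at h
        have := right_min hL₁ hL₂ hR hRc h₁ h₂ hne hmin h
        linarith
      have e2 : rhat₁ ≤ x' := by
        by_contra h; push_neg at h
        have := left_min hL₁ hL₂ hR hRc h₁' h₂' hne' hmin' h
        linarith
      have : R x ≤ R x' := hR.monotone (le_trans e1 e2)
      linarith
    · -- R x < rhat₂, R x' > rhat₂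
      have e1 : rhat₁ ≤ x := by
        by_contra h; push_neg at h
        have := left_min hL₁ hL₂ hR hRc h₁ h₂ hne hmin h
        linarith
      have e2 : x' ≤ rhat₁ := by
        by_contra h; push_neg at h
        have := right_min hL₁ hL₂ hR hRc h₁' h₂' hne' hmin' h
        linarith
      have : R x' ≤ R x := hR.monotone (le_trans e2 e1)
      linarith

/-- One-sidedness conclusion of the paper's Theorem 2: in the two-sub-property curve setting
with strictly monotone continuous model curve `R`, the optimal sub-property points for all
admissible weights lie in a single closed quadrant centered at `(r̂₁, r̂₂)`. -/
theorem one_sided_quadrant_2D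
    (L₁ L₂ : ℝ → ℝ) (rhat₁ rhat₂ : ℝ)
    (hL₁ : AccuracyRewarding L₁ rhat₁) (hL₂ : AccuracyRewarding L₂ rhat₂)
    (R : ℝ → ℝ) (hRmono : StrictMono R ∨ StrictAnti R) (hRcont : Continuous R) :
    (∀ c₁ c₂ c₁' c₂' : ℝ, 0 ≤ c₁ → 0 ≤ c₂ → ¬(c₁ = 0 ∧ c₂ = 0) →
      0 ≤ c₁' → 0 ≤ c₂' → ¬(c₁' = 0 ∧ c₂' = 0) →
      ∀ x x' : ℝ,
        (∀ y : ℝ, c₁ * L₁ x + c₂ * L₂ (R x) ≤ c₁ * L₁ y + c₂ * L₂ (R y)) →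
        (∀ y : ℝ, c₁' * L₁ x' + c₂' * L₂ (R x') ≤ c₁' * L₁ y + c₂' * L₂ (R y)) →
        0 ≤ (x - rhat₁) * (x' - rhat₁) ∧ 0 ≤ (R x - rhat₂) * (R x' - rhat₂)) ∧
    (StrictMono R → rhat₂ ≤ R rhat₁ →
      ∀ c₁ c₂ : ℝ, 0 ≤ c₁ → 0 ≤ c₂ → ¬(c₁ = 0 ∧ c₂ = 0) →
      ∀ x : ℝ,
        (∀ y : ℝ, c₁ * L₁ x + c₂ * L₂ (R x) ≤ c₁ * L₁ y + c₂ * L₂ (R y)) →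
        x ≤ rhat₁ ∧ rhat₂ ≤ R x) := by
  constructor
  · intro c₁ c₂ c₁' c₂' h₁ h₂ hne h₁' h₂' hne' x x' hmin hmin'
    rcases hRmono with hR | hR
    · exact quadrant_mono hL₁ hL₂ hR hRcont h₁ h₂ hne h₁' h₂' hne' hmin hmin'
    · -- reduce to the monotone case via `t ↦ L₂ (-t)`, `t ↦ -R t`
      have hR' : StrictMono (fun t => -R t) := fun a b hab => neg_lt_neg (hR hab)
      have hmin2 : ∀ y : ℝ, c₁ * L₁ x + c₂ * (fun t => L₂ (-t)) ((fun t => -R t) x)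
          ≤ c₁ * L₁ y + c₂ * (fun t => L₂ (-t)) ((fun t => -R t) y) := by
        simpa using hmin
      have hmin2' : ∀ y : ℝ, c₁' * L₁ x' + c₂' * (fun t => L₂ (-t)) ((fun t => -R t) x')
          ≤ c₁' * L₁ y + c₂' * (fun t => L₂ (-t)) ((fun t => -R t) y) := by
        simpa using hmin'
      have := quadrant_mono (rhat₂ := -rhat₂) hL₁ hL₂.neg hR' hRcont.neg
        h₁ h₂ hne h₁' h₂' hne' hmin2 hmin2'
      constructor
      · exact this.1
      · have h2 := this.2
        nlinarith [h2]
  · intro hR hstart c₁ c₂ h₁ h₂ hne x hmin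
    have hx1 : x ≤ rhat₁ := by
      by_contra h; push_neg at h
      have := right_min hL₁ hL₂ hR hRcont h₁ h₂ hne hmin h
      have : R rhat₁ < R x := hR h
      linarith [right_min hL₁ hL₂ hR hRcont h₁ h₂ hne hmin (by linarith : rhat₁ < x)]
    refine ⟨hx1, ?_⟩
    rcases hx1.lt_or_eq with h | h
    · exact left_min hL₁ hL₂ hR hRcont h₁ h₂ hne hmin h
    · rw [h]; exact hstart
end

section
/- In the two-sub-property curve setting, assume R : ℝ → ℝ is strictly increasing and continuous and r̂_2 ≤ R(r̂_1). Fix c_2 > 0. Then the map c_1 ↦ x*_{(c_1, c_2)} is nondecreasing on [0, ∞) and satisfies x*_{(c_1, c_2)} ≤ r̂_1 for all c_1 ≥ 0; consequently c_1 ↦ |x*_{(c_1, c_2)} − r̂_1| is nonincreasing and c_1 ↦ |R(x*_{(c_1, c_2)}) − r̂_2| is nondecreasing on [0, ∞). -/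
/-- Monotone-movement conclusion of the paper's Theorem 2: as `c₁` increases, the first
sub-property estimate moves monotonically toward its true value `r̂₁` while the second
sub-property estimate moves monotonically away from `r̂₂`. -/
theorem monotone_movement_2D
    (L₁ L₂ : ℝ → ℝ) (rhat₁ rhat₂ : ℝ)
    (hL₁ : AccuracyRewarding L₁ rhat₁) (hL₂ : AccuracyRewarding L₂ rhat₂)
    (R : ℝ → ℝ) (hRmono : StrictMono R) (hRcont : Continuous R)
    (hhat : rhat₂ ≤ R rhat₁)
    (c₂ : ℝ) (hc₂ : 0 < c₂)
    (xstar : ℝ → ℝ)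
    (hmin : ∀ c₁ : ℝ, 0 ≤ c₁ →
      ∀ y : ℝ, c₁ * L₁ (xstar c₁) + c₂ * L₂ (R (xstar c₁)) ≤ c₁ * L₁ y + c₂ * L₂ (R y)) :
    MonotoneOn xstar (Set.Ici 0) ∧
    (∀ c₁ : ℝ, 0 ≤ c₁ → xstar c₁ ≤ rhat₁) ∧
    AntitoneOn (fun c₁ => |xstar c₁ - rhat₁|) (Set.Ici 0) ∧
    MonotoneOn (fun c₁ => |R (xstar c₁) - rhat₂|) (Set.Ici 0) := by
  -- Step 1: xstar c₁ ≤ rhat₁ for all c₁ ≥ 0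
  have h1 : ∀ c₁ : ℝ, 0 ≤ c₁ → xstar c₁ ≤ rhat₁ := by
    intro c₁ hc₁
    by_contra h
    push_neg at h
    have hA : L₁ rhat₁ < L₁ (xstar c₁) := hL₁ _ _ (Or.inr ⟨le_refl _, h⟩)
    have hB : L₂ (R rhat₁) < L₂ (R (xstar c₁)) :=
      hL₂ _ _ (Or.inr ⟨hhat, hRmono h⟩)
    have hmin' := hmin c₁ hc₁ rhat₁
    nlinarith [mul_le_mul_of_nonneg_left hA.le hc₁, mul_lt_mul_of_pos_left hB hc₂]
  -- Step 2: rhat₂ ≤ R (xstar c₁) for all c₁ ≥ 0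
  have h2 : ∀ c₁ : ℝ, 0 ≤ c₁ → rhat₂ ≤ R (xstar c₁) := by
    intro c₁ hc₁
    by_contra h
    push_neg at h
    have hx : xstar c₁ < rhat₁ := by
      rcases lt_or_eq_of_le (h1 c₁ hc₁) with h' | h'
      · exact h'
      · rw [h'] at h; exact absurd hhat (not_le.mpr h)
    have hopen : IsOpen {x : ℝ | R x < rhat₂} := isOpen_lt hRcont continuous_const
    rcases Metric.isOpen_iff.mp hopen (xstar c₁) h with ⟨δ, hδ, hball⟩
    set x' := min (xstar c₁ + δ/2) rhat₁ with hx'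
    have hx'gt : xstar c₁ < x' := lt_min (by linarith) hx
    have hx'le : x' ≤ rhat₁ := min_le_right _ _
    have hx'ball : x' ∈ Metric.ball (xstar c₁) δ := by
      rw [Metric.mem_ball, Real.dist_eq, abs_of_pos (by linarith)]
      have : x' ≤ xstar c₁ + δ/2 := min_le_left _ _
      linarith
    have hRx' : R x' < rhat₂ := hball hx'ball
    have hA : L₁ x' < L₁ (xstar c₁) := hL₁ _ _ (Or.inl ⟨hx'gt, hx'le⟩)
    have hB : L₂ (R x') < L₂ (R (xstar c₁)) :=
      hL₂ _ _ (Or.inl ⟨hRmono hx'gt, hRx'.le⟩)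
    have hmin' := hmin c₁ hc₁ x'
    nlinarith [mul_le_mul_of_nonneg_left hA.le hc₁, mul_lt_mul_of_pos_left hB hc₂]
  -- Step 3: monotonicity of xstar
  have hmono : MonotoneOn xstar (Set.Ici 0) := by
    intro a ha b hb hab
    rcases eq_or_lt_of_le hab with rfl | hlt
    · exact le_refl _
    by_contra h
    push_neg at h
    have hL : L₁ (xstar a) < L₁ (xstar b) :=
      hL₁ _ _ (Or.inl ⟨h, h1 a ha⟩)
    have hA := hmin a ha (xstar b)
    have hB := hmin b hb (xstar a)
    nlinarith [mul_pos (sub_pos.mpr hlt) (sub_pos.mpr hL)]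
  refine ⟨hmono, h1, ?_, ?_⟩
  · intro a ha b hb hab
    simp only
    rw [abs_of_nonpos (by linarith [h1 b hb]), abs_of_nonpos (by linarith [h1 a ha])]
    linarith [hmono ha hb hab]
  · intro a ha b hb hab
    simp only
    rw [abs_of_nonneg (by linarith [h2 a ha]), abs_of_nonneg (by linarith [h2 b hb])]
    linarith [hRmono.monotone (hmono ha hb hab)]
end

section
/- Let t : ℝ² → ℝ be continuous, and suppose that for every x ∈ ℝ the map y ↦ t(x, y) is injective. Then either for every x ∈ ℝ the map y ↦ t(x, y) is strictly increasing, or for every x ∈ ℝ the map y ↦ t(x, y) is strictly decreasing. -/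
/-- If a continuous bivariate function is injective in the second variable for each fixed
first variable, then the direction of monotonicity in the second variable is the same
throughout the plane. -/
theorem continuous_sliceInjective_uniform_monotone
    (t : ℝ → ℝ → ℝ) (ht : Continuous fun p : ℝ × ℝ => t p.1 p.2)
    (hinj : ∀ x : ℝ, Function.Injective (t x)) :
    (∀ x : ℝ, StrictMono (t x)) ∨ (∀ x : ℝ, StrictAnti (t x)) := by
  have hcont : ∀ x : ℝ, Continuous (t x) := fun x =>
    ht.comp (Continuous.prodMk_right x)
  have halt : ∀ x : ℝ, StrictMono (t x) ∨ StrictAnti (t x) := fun x =>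
    (hcont x).strictMono_of_inj (hinj x)
  -- characterize direction by t x 0 < t x 1
  have key : ∀ x : ℝ, (StrictMono (t x) ↔ t x 0 < t x 1) := by
    intro x
    constructor
    · intro h; exact h zero_lt_one
    · intro h
      rcases halt x with hm | ha
      · exact hm
      · exact absurd (ha zero_lt_one) (not_lt.mpr h.le)
  have key' : ∀ x : ℝ, (StrictAnti (t x) ↔ t x 1 < t x 0) := by
    intro x
    constructor
    · intro h; exact h zero_lt_one
    · intro h
      rcases halt x with hm | ha
      · exact absurd (hm zero_lt_one) (not_lt.mpr h.le)
      · exact ha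
  set S : Set ℝ := {x | t x 0 < t x 1} with hS
  have hc0 : Continuous fun x => t x 0 := ht.comp (continuous_id.prodMk continuous_const)
  have hc1 : Continuous fun x => t x 1 := ht.comp (continuous_id.prodMk continuous_const)
  have hopen : IsOpen S := isOpen_lt hc0 hc1
  have hcompl : Sᶜ = {x | t x 1 < t x 0} := by
    ext x
    simp only [hS, Set.mem_compl_iff, Set.mem_setOf_eq, not_lt]
    constructor
    · intro h
      rcases lt_or_eq_of_le h with h' | h'
      · exact h'
      · exact absurd (hinj x h') one_ne_zero
    · exact le_of_lt
  have hopenc : IsOpen Sᶜ := hcompl ▸ isOpen_lt hc1 hc0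
  rcases isClopen_iff.mp ⟨isOpen_compl_iff.mp hopenc, hopen⟩ with h | h
  · right
    intro x
    have : x ∈ Sᶜ := by rw [h]; exact Set.notMem_empty x
    rw [hcompl] at this
    exact (key' x).mpr this
  · left
    intro x
    exact (key x).mpr (h ▸ Set.mem_univ x : x ∈ S)
end

section
/- Let R : ℝ → ℝ be differentiable, let t : ℝ² → ℝ be continuous and differentiable with ∂t/∂y(x, y) ≠ 0 for all (x, y), and let T : ℝ × ℝ → ℝ be a contour family for t: for every level t_0 the function x ↦ T(t_0, x) is differentiable and monotone and satisfies t(x, T(t_0, x)) = t_0 for all x ∈ ℝ, and moreover T(t(x, y), x) = y for all (x, y) ∈ ℝ². Define g(x) = t(x, R(x)) and D(x) = R'(x) − T'(t(x, R(x)), x), where T'(t_0, ·) denotes the derivative of x ↦ T(t_0, x). Then g is monotone on ℝ (nondecreasing or nonincreasing) if and only if D keeps a single sign (zero allowed) on ℝ, i.e. either D(x) ≥ 0 for all x or D(x) ≤ 0 for all x. -/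
/-!
Write `g x = t x (R x)`. Differentiating `t` along the curve and along the contour
`T (g x)` through the same point, whose derivative vanishes since `t` is constant on it, gives
`g' x = ∂t/∂y (x, R x) · D x`. Each section `t x` is continuous and injective (it has the left
inverse `T · x`), hence strictly monotone or antitone, and `x ↦ t x 1 - t x 0` never vanishes, so by the
intermediate value theorem all sections are monotone in the same direction. Together with
`∂t/∂y ≠ 0` this makes `∂t/∂y` of one strict sign everywhere, and the sign of `g'` is that of `D`
up to this fixed factor.
-/

open Function

theorem Continuous.pos_or_neg_of_ne_zero {X : Type*} [TopologicalSpace X] [PreconnectedSpace X]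
    {f : X → ℝ} (hf : Continuous f) (hf0 : ∀ x, f x ≠ 0) :
    (∀ x, 0 < f x) ∨ (∀ x, f x < 0) := by
  by_contra! h
  obtain ⟨⟨a, ha⟩, ⟨b, hb⟩⟩ := h
  obtain ⟨c, hc⟩ := intermediate_value_univ a b hf ⟨ha, hb⟩
  exact hf0 c hc

theorem strictMono_or_strictAnti_of_continuous_uncurry {X : Type*} [TopologicalSpace X]
    [PreconnectedSpace X] {t : X → ℝ → ℝ} (ht : Continuous fun p : X × ℝ => t p.1 p.2)
    (hinj : ∀ x, Injective (t x)) :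
    (∀ x, StrictMono (t x)) ∨ (∀ x, StrictAnti (t x)) := by
  have hsec : ∀ x, Continuous (t x) := fun x => ht.comp (Continuous.prodMk_right x)
  have hgap : Continuous fun x => t x 1 - t x 0 :=
    (ht.comp (Continuous.prodMk_left 1)).sub (ht.comp (Continuous.prodMk_left 0))
  refine (hgap.pos_or_neg_of_ne_zero fun x h => ?_).imp (fun hpos x => ?_) (fun hneg x => ?_)
  · exact one_ne_zero (hinj x (sub_eq_zero.mp h))
  · refine ((hsec x).strictMono_of_inj (hinj x)).resolve_right fun hanti => ?_
    linarith [hpos x, hanti zero_lt_one]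
  · refine ((hsec x).strictMono_of_inj (hinj x)).resolve_left fun hmono => ?_
    linarith [hneg x, hmono zero_lt_one]

theorem hasDerivAt_comp_graph_of_level_curve {f : ℝ × ℝ → ℝ} {R S : ℝ → ℝ} {r s x : ℝ}
    (hf : DifferentiableAt ℝ f (x, R x)) (hR : HasDerivAt R r x) (hS : HasDerivAt S s x)
    (hSR : S x = R x) (hlevel : HasDerivAt (fun x' => f (x', S x')) 0 x) :
    HasDerivAt (fun x' => f (x', R x')) (deriv (fun y => f (x, y)) (R x) * (r - s)) x := by
  set L := fderiv ℝ f (x, R x)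
  have hL : HasFDerivAt f L (x, R x) := hf.hasFDerivAt
  have hcurve : HasDerivAt (fun x' => f (x', R x')) (L (1, r)) x :=
    hL.comp_hasDerivAt x ((hasDerivAt_id x).prodMk hR)
  have hlevel_slope : L (1, s) = 0 := by
    have hcontour : HasDerivAt (fun x' => f (x', S x')) (L (1, s)) x := by
      rw [← hSR] at hL
      exact hL.comp_hasDerivAt x ((hasDerivAt_id x).prodMk hS)
    exact hcontour.unique hlevel
  have hpartial : deriv (fun y => f (x, y)) (R x) = L (0, 1) :=
    (hL.comp_hasDerivAt (R x) ((hasDerivAt_const (R x) x).prodMk (hasDerivAt_id (R x)))).deriv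
  have hsplit : ((1 : ℝ), r) = ((1 : ℝ), s) + (r - s) • ((0 : ℝ), (1 : ℝ)) := by
    simp
  convert hcurve using 1
  rw [hsplit, map_add, map_smul, hlevel_slope, hpartial, smul_eq_mul]
  ring

theorem monotone_iff_of_hasDerivAt {f f' : ℝ → ℝ} (hf : ∀ x, HasDerivAt f (f' x) x) :
    Monotone f ↔ ∀ x, 0 ≤ f' x :=
  ⟨fun h x => (hf x).nonneg_of_monotone h, fun h => monotone_of_hasDerivAt_nonneg hf h⟩

theorem antitone_iff_of_hasDerivAt {f f' : ℝ → ℝ} (hf : ∀ x, HasDerivAt f (f' x) x) :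
    Antitone f ↔ ∀ x, f' x ≤ 0 :=
  ⟨fun h x => (hf x).nonpos_of_antitone h, fun h => antitone_of_hasDerivAt_nonpos hf h⟩

theorem monotone_or_antitone_iff_of_hasDerivAt_mul_pos {g a D : ℝ → ℝ}
    (hg : ∀ x, HasDerivAt g (a x * D x) x) (ha : ∀ x, 0 < a x) :
    (Monotone g ∨ Antitone g) ↔ (∀ x, 0 ≤ D x) ∨ (∀ x, D x ≤ 0) := by
  have hnonpos : ∀ x, a x * D x ≤ 0 ↔ D x ≤ 0 := fun x => by
    simpa using mul_le_mul_iff_of_pos_left (b := D x) (c := 0) (ha x)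
  rw [monotone_iff_of_hasDerivAt hg, antitone_iff_of_hasDerivAt hg]
  simp only [mul_nonneg_iff_of_pos_left (ha _), hnonpos]

theorem monotone_or_antitone_iff_of_hasDerivAt_mul {g a D : ℝ → ℝ}
    (hg : ∀ x, HasDerivAt g (a x * D x) x) (ha : (∀ x, 0 < a x) ∨ (∀ x, a x < 0)) :
    (Monotone g ∨ Antitone g) ↔ (∀ x, 0 ≤ D x) ∨ (∀ x, D x ≤ 0) := by
  rcases ha with ha | ha
  · exact monotone_or_antitone_iff_of_hasDerivAt_mul_pos hg ha
  · have hg' : ∀ x, HasDerivAt g ((-a x) * (-D x)) x := by simpa only [neg_mul_neg] using hg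
    rw [monotone_or_antitone_iff_of_hasDerivAt_mul_pos hg' fun x => neg_pos.mpr (ha x), or_comm]
    simp only [neg_nonneg, neg_nonpos]

theorem monotone_along_curve_iff_sign_general
    (R : ℝ → ℝ) (hR : Differentiable ℝ R)
    (t : ℝ → ℝ → ℝ)
    (htd : Differentiable ℝ fun p : ℝ × ℝ => t p.1 p.2)
    (hty : ∀ x y : ℝ, deriv (fun y' => t x y') y ≠ 0)
    (T : ℝ → ℝ → ℝ)
    (hTd : ∀ t₀ : ℝ, Differentiable ℝ (T t₀))
    (hTlevel : ∀ t₀ x : ℝ, t x (T t₀ x) = t₀)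
    (hTinv : ∀ x y : ℝ, T (t x y) x = y) :
    (Monotone (fun x => t x (R x)) ∨ Antitone (fun x => t x (R x))) ↔
      ((∀ x : ℝ, 0 ≤ deriv R x - deriv (T (t x (R x))) x) ∨
        (∀ x : ℝ, deriv R x - deriv (T (t x (R x))) x ≤ 0)) := by
  have hinj : ∀ x, Injective (t x) := fun x =>
    LeftInverse.injective (g := fun c => T c x) (hTinv x)
  have hsign : (∀ x, 0 < deriv (t x) (R x)) ∨ (∀ x, deriv (t x) (R x) < 0) :=
    (strictMono_or_strictAnti_of_continuous_uncurry htd.continuous hinj).imp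
      (fun h x => (h x).monotone.deriv_nonneg.lt_of_ne' (hty x (R x)))
      (fun h x => (h x).antitone.deriv_nonpos.lt_of_ne (hty x (R x)))
  refine monotone_or_antitone_iff_of_hasDerivAt_mul (fun x => ?_) hsign
  have hcontour : HasDerivAt (fun x' => t x' (T (t x (R x)) x')) 0 x := by
    simpa only [hTlevel] using hasDerivAt_const x (t x (R x))
  exact hasDerivAt_comp_graph_of_level_curve (htd (x, R x)) (hR x).hasDerivAt
    (hTd _ x).hasDerivAt (hTinv x (R x)) hcontour

/-- The paper's Theorem 3: the link function `t` is monotone along the model curve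
`r₂ = R r₁` if and only if `R' − T'` keeps the same sign at all contact points with
contours of `t`. -/
theorem monotone_along_curve_iff_sign
    (R : ℝ → ℝ) (hR : Differentiable ℝ R)
    (t : ℝ → ℝ → ℝ)
    (htc : Continuous fun p : ℝ × ℝ => t p.1 p.2)
    (htd : Differentiable ℝ fun p : ℝ × ℝ => t p.1 p.2)
    (hty : ∀ x y : ℝ, deriv (fun y' => t x y') y ≠ 0)
    (T : ℝ → ℝ → ℝ)
    (hTd : ∀ t₀ : ℝ, Differentiable ℝ (T t₀))
    (hTm : ∀ t₀ : ℝ, Monotone (T t₀) ∨ Antitone (T t₀))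
    (hTlevel : ∀ t₀ x : ℝ, t x (T t₀ x) = t₀)
    (hTinv : ∀ x y : ℝ, T (t x y) x = y) :
    (Monotone (fun x => t x (R x)) ∨ Antitone (fun x => t x (R x))) ↔
      ((∀ x : ℝ, 0 ≤ deriv R x - deriv (T (t x (R x))) x) ∨
        (∀ x : ℝ, deriv R x - deriv (T (t x (R x))) x ≤ 0)) :=
  monotone_along_curve_iff_sign_general R hR t htd hty T hTd hTlevel hTinv
end

section
/- In the two-sub-property curve setting with contour family, assume R : ℝ → ℝ is differentiable and strictly monotone, and assume that either R'(x) ≥ T'(t(x, R(x)), x) for all x ∈ ℝ, or R'(x) ≤ T'(t(x, R(x)), x) for all x ∈ ℝ. Then for every (r̂_1, r̂_2) ∈ ℝ², every pair of sub-losses L_1, L_2 accuracy-rewarding with respect to r̂_1 and r̂_2, and every fixed c_2 > 0, the map c_1 ↦ t(x*_{(c_1, c_2)}, R(x*_{(c_1, c_2)})) is monotone (nondecreasing or nonincreasing) on [0, ∞). -/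
open Set Function

namespace AccuracyRewarding

variable {L : ℝ → ℝ} {r : ℝ}

theorem strictAntiOn (h : AccuracyRewarding L r) : StrictAntiOn L (Iic r) :=
  fun _ _ _ hb hab => h _ _ (Or.inl ⟨hab, hb⟩)

theorem strictMonoOn (h : AccuracyRewarding L r) : StrictMonoOn L (Ici r) :=
  fun _ ha _ _ hab => h _ _ (Or.inr ⟨ha, hab⟩)

theorem strictMonoOn_or_strictAntiOn_uIcc (h : AccuracyRewarding L r) (m : ℝ) :
    StrictMonoOn L (uIcc r m) ∨ StrictAntiOn L (uIcc r m) := by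
  rcases le_total r m with hrm | hmr
  · exact Or.inl (h.strictMonoOn.mono (uIcc_of_le hrm ▸ Icc_subset_Ici_self))
  · exact Or.inr (h.strictAntiOn.mono (uIcc_of_ge hmr ▸ Icc_subset_Iic_self))

theorem lt_of_mem_uIcc {x a : ℝ} (h : AccuracyRewarding L r) (ha : a ∈ uIcc x r) (hne : a ≠ x) :
    L a < L x := by
  rcases mem_uIcc.1 ha with ⟨hxa, har⟩ | ⟨hra, hax⟩
  · exact h x a (Or.inl ⟨lt_of_le_of_ne hxa hne.symm, har⟩)
  · exact h x a (Or.inr ⟨hra, lt_of_le_of_ne hax hne⟩)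

theorem quasiconvexOn (h : AccuracyRewarding L r) : QuasiconvexOn ℝ univ L :=
  convex_univ.quasiconvexOn_of_convex_le fun c => convex_iff_ordConnected.2
    ⟨fun x hx y hy z ⟨hxz, hzy⟩ => by
      rcases le_total z r with hzr | hrz
      · exact (h.strictAntiOn.antitoneOn (hxz.trans hzr) hzr hxz).trans hx
      · exact (h.strictMonoOn.monotoneOn hrz (hrz.trans hzy) hzy).trans hy⟩

end AccuracyRewarding

section Quasiconvex

variable {β : Type*} [LinearOrder β] {f : ℝ → β}

theorem QuasiconvexOn.le_max_of_mem_uIcc (hf : QuasiconvexOn ℝ univ f) {x y z : ℝ}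
    (hz : z ∈ uIcc x y) : f z ≤ max (f x) (f y) :=
  ((convex_iff_ordConnected.1 (hf (max (f x) (f y)))).uIcc_subset
    ⟨mem_univ x, le_max_left _ _⟩ ⟨mem_univ y, le_max_right _ _⟩ hz).2

theorem QuasiconvexOn.comp_monotone_or_antitone (hf : QuasiconvexOn ℝ univ f) {R : ℝ → ℝ}
    (hR : Monotone R ∨ Antitone R) : QuasiconvexOn ℝ univ (f ∘ R) := by
  refine convex_univ.quasiconvexOn_of_convex_le fun c => convex_iff_ordConnected.2 ?_
  have hsub : OrdConnected {y | f y ≤ c} := by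
    simpa only [mem_univ, true_and] using convex_iff_ordConnected.1 (hf c)
  rcases hR with hR | hR
  · exact hsub.preimage_mono hR
  · exact hsub.preimage_anti hR

end Quasiconvex

theorem antitoneOn_apply_of_minimizes_mul_add {α : Type*} {f g : α → ℝ} {x : ℝ → α}
    {s : Set ℝ} (hmin : ∀ c ∈ s, ∀ y, c * f (x c) + g (x c) ≤ c * f y + g y) :
    AntitoneOn (fun c => f (x c)) s := by
  intro a ha b hb hab
  rcases hab.eq_or_lt with rfl | hab
  · exact le_rfl
  have h₁ := hmin a ha (x b)
  have h₂ := hmin b hb (x a)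
  have hmul : (b - a) * f (x b) ≤ (b - a) * f (x a) := by linarith
  exact le_of_mul_le_mul_left hmul (sub_pos.2 hab)

theorem mem_uIcc_of_minimizes_mul_add {f g : ℝ → ℝ} {r m x c : ℝ} (hf : AccuracyRewarding f r)
    (hg : QuasiconvexOn ℝ univ g) (hm : ∀ y, g m ≤ g y) (hc : 0 < c)
    (hx : ∀ y, c * f x + g x ≤ c * f y + g y) : x ∈ uIcc r m := by
  have hfix : ∀ a ∈ uIcc x r, a ∈ uIcc x m → a = x := by
    intro a har ham
    by_contra hne
    have hfa : f a < f x := hf.lt_of_mem_uIcc har hne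
    have hga : g a ≤ g x := (hg.le_max_of_mem_uIcc ham).trans (max_eq_left (hm x)).le
    have := hx a
    have := mul_lt_mul_of_pos_left hfa hc
    linarith
  rcases lt_or_ge x (min r m) with hlt | hge
  · exact absurd (hfix _ (mem_uIcc_of_le hlt.le (min_le_left r m))
      (mem_uIcc_of_le hlt.le (min_le_right r m))) hlt.ne'
  rcases lt_or_ge (max r m) x with hgt | hle
  · exact absurd (hfix _ (mem_uIcc_of_ge (le_max_left r m) hgt.le)
      (mem_uIcc_of_ge (le_max_right r m) hgt.le)) hgt.ne
  · exact ⟨hge, hle⟩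

theorem monotoneOn_or_antitoneOn_of_antitoneOn_comp {α β γ : Type*} [Preorder α] [LinearOrder β]
    [Preorder γ] {f : β → γ} {x : α → β} {s : Set α} {t : Set β}
    (hf : StrictMonoOn f t ∨ StrictAntiOn f t) (hx : MapsTo x s t)
    (hfx : AntitoneOn (fun c => f (x c)) s) : MonotoneOn x s ∨ AntitoneOn x s := by
  rcases hf with hf | hf
  · exact Or.inr fun a ha b hb hab => (hf.le_iff_le (hx hb) (hx ha)).1 (hfx ha hb hab)
  · exact Or.inl fun a ha b hb hab => (hf.le_iff_ge (hx hb) (hx ha)).1 (hfx ha hb hab)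

theorem hasDerivAt_comp_graph_of_level {f : ℝ × ℝ → ℝ} {u v : ℝ → ℝ} {x u' v' c : ℝ}
    (hf : DifferentiableAt ℝ f (x, u x)) (hu : HasDerivAt u u' x) (hv : HasDerivAt v v' x)
    (hvu : v x = u x) (hlevel : ∀ z, f (z, v z) = c) :
    HasDerivAt (fun z => f (z, u z)) ((u' - v') * deriv (fun y => f (x, y)) (u x)) x := by
  set F := fderiv ℝ f (x, u x)
  have hF : HasFDerivAt f F (x, u x) := hf.hasFDerivAt
  have hpartial : deriv (fun y => f (x, y)) (u x) = F (0, 1) :=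
    (hF.comp_hasDerivAt (u x) ((hasDerivAt_const _ x).prodMk (hasDerivAt_id _))).deriv
  have hlevelDeriv : HasDerivAt (fun z => f (z, v z)) (F (1, v')) x :=
    (hvu ▸ hF).comp_hasDerivAt x ((hasDerivAt_id x).prodMk hv)
  have htangent : F (1, v') = 0 := by
    rw [show (fun z => f (z, v z)) = fun _ => c from funext hlevel] at hlevelDeriv
    exact hlevelDeriv.unique (hasDerivAt_const x c)
  have hsplit : F (1, u') = F (1, v') + (u' - v') * F (0, 1) := by
    rw [← smul_eq_mul, ← map_smul, ← map_add]
    congr 1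
    ext <;> simp
  have hnormal : F (1, u') = (u' - v') * F (0, 1) := by rw [hsplit, htangent, zero_add]
  rw [hpartial, ← hnormal]
  exact hF.comp_hasDerivAt x ((hasDerivAt_id x).prodMk hu)

/-- By injectivity, `s ↦ t s 0 - t s 1` never vanishes, so by connectedness it has a constant
sign. -/
theorem forall_strictMono_or_forall_strictAnti {X : Type*} [TopologicalSpace X]
    [PreconnectedSpace X] {t : X → ℝ → ℝ} (ht : Continuous (uncurry t))
    (hinj : ∀ x, Injective (t x)) : (∀ x, StrictMono (t x)) ∨ (∀ x, StrictAnti (t x)) := by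
  by_contra! h
  obtain ⟨⟨x₁, hx₁⟩, x₂, hx₂⟩ := h
  have hsection : ∀ x, StrictMono (t x) ∨ StrictAnti (t x) := fun x =>
    (ht.comp (Continuous.prodMk_right x)).strictMono_of_inj (hinj x)
  have hanti : StrictAnti (t x₁) := (hsection x₁).resolve_left hx₁
  have hmono : StrictMono (t x₂) := (hsection x₂).resolve_right hx₂
  have hg : Continuous fun s => t s 0 - t s 1 :=
    (ht.comp (.prodMk_left 0)).sub (ht.comp (.prodMk_left 1))
  obtain ⟨s, hs⟩ := mem_range_of_exists_le_of_exists_ge hg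
    ⟨x₂, sub_nonpos.2 (hmono zero_lt_one).le⟩ ⟨x₁, sub_nonneg.2 (hanti zero_lt_one).le⟩
  exact zero_ne_one (hinj s (sub_eq_zero.1 hs))

theorem monotone_or_antitone_of_hasDerivAt_mul {φ a b : ℝ → ℝ}
    (hφ : ∀ x, HasDerivAt φ (a x * b x) x) (ha : (∀ x, 0 ≤ a x) ∨ (∀ x, a x ≤ 0))
    (hb : (∀ x, 0 ≤ b x) ∨ (∀ x, b x ≤ 0)) : Monotone φ ∨ Antitone φ := by
  have hd : Differentiable ℝ φ := fun x => (hφ x).differentiableAt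
  have hderiv : ∀ x, deriv φ x = a x * b x := fun x => (hφ x).deriv
  rcases ha with ha | ha <;> rcases hb with hb | hb
  · exact .inl (monotone_of_deriv_nonneg hd fun x => hderiv x ▸ mul_nonneg (ha x) (hb x))
  · exact .inr (antitone_of_deriv_nonpos hd fun x =>
      hderiv x ▸ mul_nonpos_of_nonneg_of_nonpos (ha x) (hb x))
  · exact .inr (antitone_of_deriv_nonpos hd fun x =>
      hderiv x ▸ mul_nonpos_of_nonpos_of_nonneg (ha x) (hb x))
  · exact .inl (monotone_of_deriv_nonneg hd fun x =>
      hderiv x ▸ mul_nonneg_of_nonpos_of_nonpos (ha x) (hb x))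

theorem monotoneOn_or_antitoneOn_comp {α β γ : Type*} [Preorder α] [Preorder β] [Preorder γ]
    {φ : β → γ} {x : α → β} {s : Set α} (hφ : Monotone φ ∨ Antitone φ)
    (hx : MonotoneOn x s ∨ AntitoneOn x s) : MonotoneOn (φ ∘ x) s ∨ AntitoneOn (φ ∘ x) s := by
  rcases hφ with hφ | hφ <;> rcases hx with hx | hx
  exacts [Or.inl (hφ.comp_monotoneOn hx), Or.inr (hφ.comp_antitoneOn hx),
    Or.inr (hφ.comp_monotoneOn hx), Or.inl (hφ.comp_antitoneOn hx)]

theorem target_estimate_monotone_in_weight_general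
    (t : ℝ → ℝ → ℝ)
    (htd : Differentiable ℝ fun p : ℝ × ℝ => t p.1 p.2)
    (T : ℝ → ℝ → ℝ)
    (hTd : ∀ t₀ : ℝ, Differentiable ℝ (T t₀))
    (hTlevel : ∀ t₀ x : ℝ, t x (T t₀ x) = t₀)
    (hTinv : ∀ x y : ℝ, T (t x y) x = y)
    (R : ℝ → ℝ) (hRd : Differentiable ℝ R) (hRmono : StrictMono R ∨ StrictAnti R)
    (hsign : (∀ x : ℝ, deriv (T (t x (R x))) x ≤ deriv R x) ∨
      (∀ x : ℝ, deriv R x ≤ deriv (T (t x (R x))) x))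
    (rhat₁ rhat₂ : ℝ) (L₁ L₂ : ℝ → ℝ)
    (hL₁ : AccuracyRewarding L₁ rhat₁) (hL₂ : AccuracyRewarding L₂ rhat₂)
    (c₂ : ℝ) (hc₂ : 0 < c₂)
    (xstar : ℝ → ℝ)
    (hmin : ∀ c₁ : ℝ, 0 ≤ c₁ →
      ∀ y : ℝ, c₁ * L₁ (xstar c₁) + c₂ * L₂ (R (xstar c₁)) ≤ c₁ * L₁ y + c₂ * L₂ (R y)) :
    MonotoneOn (fun c₁ => t (xstar c₁) (R (xstar c₁))) (Set.Ici 0) ∨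
      AntitoneOn (fun c₁ => t (xstar c₁) (R (xstar c₁))) (Set.Ici 0) := by
  have hg : QuasiconvexOn ℝ univ fun y => c₂ * L₂ (R y) :=
    (hL₂.quasiconvexOn.comp_monotone_or_antitone (hRmono.imp StrictMono.monotone
      StrictAnti.antitone)).monotone_comp (monotone_mul_left_of_nonneg hc₂.le)
  have hm : ∀ y, c₂ * L₂ (R (xstar 0)) ≤ c₂ * L₂ (R y) := by simpa using hmin 0 le_rfl
  have hloc : MapsTo xstar (Ici 0) (uIcc rhat₁ (xstar 0)) := by
    intro c hc
    rcases (mem_Ici.1 hc).eq_or_lt with rfl | hc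
    · exact right_mem_uIcc
    · exact mem_uIcc_of_minimizes_mul_add hL₁ hg hm hc (hmin c hc.le)
  have hx : MonotoneOn xstar (Ici 0) ∨ AntitoneOn xstar (Ici 0) :=
    monotoneOn_or_antitoneOn_of_antitoneOn_comp (hL₁.strictMonoOn_or_strictAntiOn_uIcc _) hloc
      (antitoneOn_apply_of_minimizes_mul_add (g := fun y => c₂ * L₂ (R y)) hmin)
  have hsections := forall_strictMono_or_forall_strictAnti htd.continuous fun x =>
    LeftInverse.injective (g := fun s => T s x) (hTinv x)
  have hφ : Monotone (fun z => t z (R z)) ∨ Antitone fun z => t z (R z) :=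
    monotone_or_antitone_of_hasDerivAt_mul
      (fun x => hasDerivAt_comp_graph_of_level (htd _) (hRd x).hasDerivAt (hTd _ x).hasDerivAt
        (hTinv x (R x)) (hTlevel _))
      (hsign.imp (fun h x => sub_nonneg.2 (h x)) fun h x => sub_nonpos.2 (h x))
      (hsections.imp (fun h x => (h x).monotone.deriv_nonneg) fun h x =>
        (h x).antitone.deriv_nonpos)
  exact monotoneOn_or_antitoneOn_comp hφ hx

/-- Preliminary monotonicity conclusion in the paper's Theorem 4: the optimal parametric
estimate of the target property is monotone in each weight. -/
theorem target_estimate_monotone_in_weight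
    (t : ℝ → ℝ → ℝ)
    (htc : Continuous fun p : ℝ × ℝ => t p.1 p.2)
    (htd : Differentiable ℝ fun p : ℝ × ℝ => t p.1 p.2)
    (hty : ∀ x y : ℝ, deriv (fun y' => t x y') y ≠ 0)
    (T : ℝ → ℝ → ℝ)
    (hTd : ∀ t₀ : ℝ, Differentiable ℝ (T t₀))
    (hTm : ∀ t₀ : ℝ, Monotone (T t₀) ∨ Antitone (T t₀))
    (hTlevel : ∀ t₀ x : ℝ, t x (T t₀ x) = t₀)
    (hTinv : ∀ x y : ℝ, T (t x y) x = y)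
    (R : ℝ → ℝ) (hRd : Differentiable ℝ R) (hRmono : StrictMono R ∨ StrictAnti R)
    (hsign : (∀ x : ℝ, deriv (T (t x (R x))) x ≤ deriv R x) ∨
      (∀ x : ℝ, deriv R x ≤ deriv (T (t x (R x))) x))
    (rhat₁ rhat₂ : ℝ) (L₁ L₂ : ℝ → ℝ)
    (hL₁ : AccuracyRewarding L₁ rhat₁) (hL₂ : AccuracyRewarding L₂ rhat₂)
    (c₂ : ℝ) (hc₂ : 0 < c₂)
    (xstar : ℝ → ℝ)
    (hmin : ∀ c₁ : ℝ, 0 ≤ c₁ →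
      ∀ y : ℝ, c₁ * L₁ (xstar c₁) + c₂ * L₂ (R (xstar c₁)) ≤ c₁ * L₁ y + c₂ * L₂ (R y)) :
    MonotoneOn (fun c₁ => t (xstar c₁) (R (xstar c₁))) (Set.Ici 0) ∨
      AntitoneOn (fun c₁ => t (xstar c₁) (R (xstar c₁))) (Set.Ici 0) :=
  target_estimate_monotone_in_weight_general t htd T hTd hTlevel hTinv R hRd hRmono hsign rhat₁
    rhat₂ L₁ L₂ hL₁ hL₂ c₂ hc₂ xstar hmin
end
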